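/- arXiv:2508.08853 — 2 statements merged into one kernel-verified Lean document; each statement's English description precedes it below -/
import Mathlib

section
/- Let G be a connected non-complete graph and H a connected graph with m vertices, and let g be an integer with 0 ≤ g ≤ m − 1. Then the g-extra vertex connectivity of the subdivision edge neighbourhood corona satisfies κ_g(G ⊟ H) = 1 if and only if κ(G) = 1. -/
open SimpleGraph

namespace ExtraConn

variable {V W : Type*}

/-- `S` is an `R_g` vertex cut: deleting `S` disconnects the graph and every
connected component of the remainder has at least `g+1` vertices. -/
def IsRgVertexCut (G : SimpleGraph V) (g : ℕ) (S : Set V) : Prop :=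
  ¬ (G.induce Sᶜ).Preconnected ∧
    ∀ c : (G.induce Sᶜ).ConnectedComponent,
      g + 1 ≤ Nat.card {v : ↥Sᶜ // (G.induce Sᶜ).connectedComponentMk v = c}

/-- The `g`-extra vertex connectivity `κ_g(G)` (`⊤` if no `R_g` vertex cut exists). -/
noncomputable def kappaG (G : SimpleGraph V) (g : ℕ) : ℕ∞ :=
  sInf {n : ℕ∞ | ∃ S : Finset V, IsRgVertexCut G g ↑S ∧ (S.card : ℕ∞) = n}

/-- `S` is a vertex cut of `G`. -/
def IsVertexCut (G : SimpleGraph V) (S : Set V) : Prop :=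
  ¬ (G.induce Sᶜ).Preconnected

/-- The vertex connectivity `κ(G)` (for graphs admitting a vertex cut). -/
noncomputable def kappa (G : SimpleGraph V) : ℕ :=
  sInf {n : ℕ | ∃ S : Finset V, IsVertexCut G ↑S ∧ S.card = n}

/-- `S` is a minimum vertex cut of `G`. -/
def IsMinVertexCut (G : SimpleGraph V) (S : Finset V) : Prop :=
  IsVertexCut G ↑S ∧ S.card = kappa G

/-- Deleting the vertex set `↑A` leaves only components with at least `k+1` vertices. -/
def CutBound (G : SimpleGraph V) (A : Finset V) (k : ℕ) : Prop :=
  ∀ c : (G.induce (↑A : Set V)ᶜ).ConnectedComponent,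
    k + 1 ≤ Nat.card {v // (G.induce (↑A : Set V)ᶜ).connectedComponentMk v = c}

/-- `F` is an `R_g` edge cut. -/
def IsRgEdgeCut (G : SimpleGraph V) (g : ℕ) (F : Set (Sym2 V)) : Prop :=
  F ⊆ G.edgeSet ∧ ¬ (G.deleteEdges F).Preconnected ∧
    ∀ c : (G.deleteEdges F).ConnectedComponent,
      g + 1 ≤ Nat.card {v : V // (G.deleteEdges F).connectedComponentMk v = c}

/-- The `g`-extra edge connectivity `λ_g(G)`. -/
noncomputable def lambdaG (G : SimpleGraph V) (g : ℕ) : ℕ∞ :=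
  sInf {n : ℕ∞ | ∃ F : Finset (Sym2 V), IsRgEdgeCut G g ↑F ∧ (F.card : ℕ∞) = n}

/-- The edge connectivity `λ(G)`. -/
noncomputable def lambda (G : SimpleGraph V) : ℕ :=
  sInf {n : ℕ | ∃ F : Finset (Sym2 V), ↑F ⊆ G.edgeSet ∧
    ¬ (G.deleteEdges ↑F).Preconnected ∧ F.card = n}

/-- The edge corona `G ◇ H`. -/
def edgeCorona (G : SimpleGraph V) (H : SimpleGraph W) :
    SimpleGraph (V ⊕ (G.edgeSet × W)) where
  Adj a b :=
    match a, b with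
    | .inl u, .inl v => G.Adj u v
    | .inl u, .inr ew => u ∈ (ew.1 : Sym2 V)
    | .inr ew, .inl v => v ∈ (ew.1 : Sym2 V)
    | .inr ew, .inr ew' => ew.1 = ew'.1 ∧ H.Adj ew.2 ew'.2
  symm := by
    constructor
    rintro (u | ⟨e, w⟩) (v | ⟨e', w'⟩) h
    · exact h.symm
    · exact h
    · exact h
    · exact ⟨h.1.symm, h.2.symm⟩
  loopless := by
    constructor
    rintro (u | ⟨e, w⟩) h
    · exact G.irrefl h
    · exact H.irrefl h.2

/-- The neighbourhood corona `G * H`. -/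
def neighbourhoodCorona (G : SimpleGraph V) (H : SimpleGraph W) :
    SimpleGraph (V ⊕ (V × W)) where
  Adj a b :=
    match a, b with
    | .inl u, .inl v => G.Adj u v
    | .inl u, .inr iw => G.Adj u iw.1
    | .inr iw, .inl v => G.Adj v iw.1
    | .inr iw, .inr iw' => iw.1 = iw'.1 ∧ H.Adj iw.2 iw'.2
  symm := by
    constructor
    rintro (u | ⟨i, w⟩) (v | ⟨i', w'⟩) h
    · exact h.symm
    · exact h
    · exact h
    · exact ⟨h.1.symm, h.2.symm⟩
  loopless := by
    constructor
    rintro (u | ⟨i, w⟩) h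
    · exact G.irrefl h
    · exact H.irrefl h.2

/-- The subdivision graph `S(G)`. -/
def subdivision (G : SimpleGraph V) : SimpleGraph (V ⊕ G.edgeSet) where
  Adj a b :=
    match a, b with
    | .inl u, .inr e => u ∈ (e : Sym2 V)
    | .inr e, .inl u => u ∈ (e : Sym2 V)
    | _, _ => False
  symm := by
    constructor
    rintro (u | e) (v | e') h
    · exact h.elim
    · exact h
    · exact h
    · exact h.elim
  loopless := by
    constructor
    rintro (u | e) h <;> exact h.elim

/-- The subdivision vertex neighbourhood corona `G ⊡ H`. -/
def subdivisionVertexNC (G : SimpleGraph V) (H : SimpleGraph W) :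
    SimpleGraph ((V ⊕ G.edgeSet) ⊕ (V × W)) where
  Adj a b :=
    match a, b with
    | .inl x, .inl y => (subdivision G).Adj x y
    | .inl (.inr e), .inr iw => iw.1 ∈ (e : Sym2 V)
    | .inr iw, .inl (.inr e) => iw.1 ∈ (e : Sym2 V)
    | .inr iw, .inr iw' => iw.1 = iw'.1 ∧ H.Adj iw.2 iw'.2
    | _, _ => False
  symm := by
    constructor
    rintro ((u | e) | ⟨i, w⟩) ((v | e') | ⟨i', w'⟩) h
    · exact h.elim
    · exact h
    · exact h.elim
    · exact h
    · exact h.elim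
    · exact h
    · exact h.elim
    · exact h
    · exact ⟨h.1.symm, h.2.symm⟩
  loopless := by
    constructor
    rintro ((u | e) | ⟨i, w⟩) h
    · exact h.elim
    · exact h.elim
    · exact H.irrefl h.2

/-- The subdivision edge neighbourhood corona `G ⊟ H`. -/
def subdivisionEdgeNC (G : SimpleGraph V) (H : SimpleGraph W) :
    SimpleGraph ((V ⊕ G.edgeSet) ⊕ (G.edgeSet × W)) where
  Adj a b :=
    match a, b with
    | .inl x, .inl y => (subdivision G).Adj x y
    | .inl (.inl u), .inr ew => u ∈ (ew.1 : Sym2 V)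
    | .inr ew, .inl (.inl u) => u ∈ (ew.1 : Sym2 V)
    | .inr ew, .inr ew' => ew.1 = ew'.1 ∧ H.Adj ew.2 ew'.2
    | _, _ => False
  symm := by
    constructor
    rintro ((u | e) | ⟨e₀, w⟩) ((v | e') | ⟨e₀', w'⟩) h
    · exact h.elim
    · exact h
    · exact h
    · exact h
    · exact h.elim
    · exact h.elim
    · exact h
    · exact h.elim
    · exact ⟨h.1.symm, h.2.symm⟩
  loopless := by
    constructor
    rintro ((u | e) | ⟨e₀, w⟩) h
    · exact h.elim
    · exact h.elim
    · exact H.irrefl h.2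

/-- The generalized corona `G ∘ ⋀ᵢ Hᵢ`. -/
def genCorona (G : SimpleGraph V) {W : V → Type*} (H : ∀ v, SimpleGraph (W v)) :
    SimpleGraph (V ⊕ (Σ v, W v)) where
  Adj a b :=
    match a, b with
    | .inl u, .inl v => G.Adj u v
    | .inl u, .inr p => u = p.1
    | .inr p, .inl v => v = p.1
    | .inr p, .inr q =>
        ∃ (v : V) (w w' : W v), p = ⟨v, w⟩ ∧ q = ⟨v, w'⟩ ∧ (H v).Adj w w'
  symm := by
    constructor
    rintro (u | p) (v | q) h
    · exact h.symm
    · exact h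
    · exact h
    · obtain ⟨v, w, w', rfl, rfl, hadj⟩ := h
      exact ⟨v, w', w, rfl, rfl, hadj.symm⟩
  loopless := by
    constructor
    rintro (u | p) h
    · exact G.irrefl h
    · obtain ⟨v, w, w', rfl, h2, hadj⟩ := h
      obtain rfl : w = w' := by simpa using h2
      exact (H v).irrefl hadj

/-- The rooted product `H(G)` with root `r`. -/
def rootedProduct (G : SimpleGraph V) (H : SimpleGraph W) (r : W) :
    SimpleGraph (V × W) where
  Adj a b := (a.1 = b.1 ∧ H.Adj a.2 b.2) ∨ (a.2 = r ∧ b.2 = r ∧ G.Adj a.1 b.1)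
  symm := by
    constructor
    rintro ⟨x, y⟩ ⟨x', y'⟩ (⟨h1, h2⟩ | ⟨h1, h2, h3⟩)
    · exact Or.inl ⟨h1.symm, h2.symm⟩
    · exact Or.inr ⟨h2, h1, h3.symm⟩
  loopless := by
    constructor
    rintro ⟨x, y⟩ (⟨-, h⟩ | ⟨-, -, h⟩)
    · exact H.irrefl h
    · exact G.irrefl h

/-!
Every vertex of `G ⊟ H` other than a branch vertex lies over an edge of `G` and is adjacent to
its ends, and after deleting at most one vertex the two ends of an edge `e` are still joined,
through `w_e` or through `H_e`. So deleting a non-branch vertex never disconnects `G ⊟ H`, and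
deleting a branch vertex `u` disconnects it exactly when `u` is a cut vertex of `G`. In that
case every component contains a vertex `t ≠ u` of `G` together with all `m ≥ g + 1` vertices
of a copy `H_e` on an edge `e` at `t`.
-/

open Sum

theorem _root_.Nat.sInf_eq_one_iff {s : Set ℕ} (h0 : 0 ∉ s) : sInf s = 1 ↔ 1 ∈ s := by
  refine ⟨fun h => ?_, fun h => le_antisymm (Nat.sInf_le h) ?_⟩
  · have hs : s.Nonempty := Set.nonempty_iff_ne_empty.mpr fun hs => by simp [hs] at h
    exact h ▸ Nat.sInf_mem hs
  · rw [Nat.one_le_iff_ne_zero, Ne, Nat.sInf_eq_zero]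
    rintro (h0' | rfl)
    exacts [h0 h0', h]

theorem _root_.ENat.sInf_eq_one_iff {s : Set ℕ∞} (h0 : 0 ∉ s) : sInf s = 1 ↔ 1 ∈ s := by
  refine ⟨fun h => ?_, fun h => le_antisymm (sInf_le h) ?_⟩
  · have hs : s.Nonempty := Set.nonempty_iff_ne_empty.mpr fun hs => by simp [hs] at h
    exact h ▸ csInf_mem hs
  · rw [Order.one_le_iff_ne_zero, Ne, ENat.sInf_eq_zero]
    exact h0

section

variable {α β : Type*} {G : SimpleGraph α} {G' : SimpleGraph β}

theorem _root_.SimpleGraph.Preconnected.of_reachable_map (hG : G.Preconnected) (f : α → β)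
    (hf : ∀ ⦃x y⦄, G.Adj x y → G'.Reachable (f x) (f y))
    (hcover : ∀ y, ∃ x, G'.Reachable (f x) y) : G'.Preconnected := by
  have hreach : ∀ x x', G'.Reachable (f x) (f x') := fun x x' => by
    obtain ⟨p⟩ := hG x x'
    induction p with
    | nil => rfl
    | cons h _ ih => exact (hf h).trans ih
  intro y y'
  obtain ⟨x, hx⟩ := hcover y
  obtain ⟨x', hx'⟩ := hcover y'
  exact hx.symm.trans ((hreach x x').trans hx')

theorem _root_.SimpleGraph.exists_mem_edge_ne {e : Sym2 α} (he : e ∈ G.edgeSet) (u : α) :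
    ∃ t ∈ e, t ≠ u := by
  induction e using Sym2.ind with
  | _ a b =>
    by_cases ha : a = u
    · exact ⟨b, Sym2.mem_mk_right a b, ha ▸ (G.ne_of_adj he).symm⟩
    · exact ⟨a, Sym2.mem_mk_left a b, ha⟩

theorem _root_.SimpleGraph.eq_or_adj_of_mem_edge {e : Sym2 α} (he : e ∈ G.edgeSet) {a b : α}
    (ha : a ∈ e) (hb : b ∈ e) : a = b ∨ G.Adj a b := by
  by_cases hab : a = b
  · exact .inl hab
  · rw [(Sym2.mem_and_mem_iff hab).mp ⟨ha, hb⟩] at he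
    exact .inr he

end

section Connectivity

variable {G : SimpleGraph V}

theorem not_isVertexCut_empty (hG : G.Preconnected) : ¬ IsVertexCut G ↑(∅ : Finset V) := by
  intro h
  apply h
  rw [Finset.coe_empty, Set.compl_empty]
  exact (induceUnivIso G).preconnected_iff.mpr hG

theorem kappa_eq_one_iff (hG : G.Preconnected) : kappa G = 1 ↔ ∃ u, IsVertexCut G {u} := by
  rw [kappa, Nat.sInf_eq_one_iff]
  · simp [Finset.card_eq_one]
  · rintro ⟨S, hS, hcard⟩
    rw [Finset.card_eq_zero.mp hcard] at hS
    exact not_isVertexCut_empty hG hS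

theorem kappaG_eq_one_iff (hG : G.Preconnected) (g : ℕ) :
    kappaG G g = 1 ↔ ∃ x, IsRgVertexCut G g {x} := by
  rw [kappaG, ENat.sInf_eq_one_iff]
  · simp [Finset.card_eq_one]
  · rintro ⟨S, hS, hcard⟩
    rw [Nat.cast_eq_zero, Finset.card_eq_zero] at hcard
    rw [hcard] at hS
    exact not_isVertexCut_empty hG hS.1

end Connectivity

section SubdivisionEdgeNC

variable {G : SimpleGraph V} {H : SimpleGraph W}

/-- The edge of `G` carrying a vertex of `G ⊟ H`; a branch vertex `v` lies over `s(v, v)`. -/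
def footprint : (V ⊕ G.edgeSet) ⊕ (G.edgeSet × W) → Sym2 V
  | inl (inl v) => s(v, v)
  | inl (inr e) => e
  | inr (e, _) => e

theorem eq_or_adj_of_mem_footprint {x y : (V ⊕ G.edgeSet) ⊕ (G.edgeSet × W)}
    (hxy : (subdivisionEdgeNC G H).Adj x y) {a b : V} (ha : a ∈ footprint x)
    (hb : b ∈ footprint y) : a = b ∨ G.Adj a b := by
  rcases x with (v | e) | ⟨e, w⟩ <;> rcases y with (v' | e') | ⟨e', w'⟩ <;>
    simp only [footprint, Sym2.mem_iff, or_self] at ha hb <;> subst_vars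
  all_goals first
    | exact hxy.elim
    | exact eq_or_adj_of_mem_edge e'.2 hxy hb
    | exact eq_or_adj_of_mem_edge e.2 ha hxy
    | exact eq_or_adj_of_mem_edge e.2 ha (by rwa [show e = e' from hxy.1])

theorem exists_mem_footprint_ne {x : (V ⊕ G.edgeSet) ⊕ (G.edgeSet × W)} {u : V}
    (hx : x ≠ inl (inl u)) : ∃ a ∈ footprint x, a ≠ u := by
  rcases x with (v | e) | ⟨e, w⟩
  · exact ⟨v, Sym2.mem_mk_left v v, fun h => hx (h ▸ rfl)⟩
  · exact exists_mem_edge_ne e.2 u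
  · exact exists_mem_edge_ne e.2 u

variable {s : Set ((V ⊕ G.edgeSet) ⊕ (G.edgeSet × W))}

theorem exists_mem_edge_inl_inl_mem (hs : sᶜ.Subsingleton) (e : G.edgeSet) :
    ∃ a ∈ (e : Sym2 V), inl (inl a) ∈ s := by
  obtain ⟨e, he⟩ := e
  induction e using Sym2.ind with
  | _ a b =>
    by_contra! h
    exact G.ne_of_adj he (inl_injective (inl_injective
      (hs (h a (Sym2.mem_mk_left a b)) (h b (Sym2.mem_mk_right a b)))))

theorem exists_reachable_inl_inl (hs : sᶜ.Subsingleton) (x : s) :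
    ∃ v, ∃ hv : inl (inl v) ∈ s,
      ((subdivisionEdgeNC G H).induce s).Reachable x ⟨_, hv⟩ := by
  obtain ⟨(v | e) | ⟨e, w⟩, hx⟩ := x
  · exact ⟨v, hx, .rfl⟩
  all_goals
    obtain ⟨a, ha, has⟩ := exists_mem_edge_inl_inl_mem hs e
    exact ⟨a, has, Adj.reachable (G := (subdivisionEdgeNC G H).induce s) ha⟩

theorem reachable_inl_inl_of_adj [Nonempty W] (hs : sᶜ.Subsingleton) {a b : V} (hab : G.Adj a b)
    (ha : inl (inl a) ∈ s) (hb : inl (inl b) ∈ s) :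
    ((subdivisionEdgeNC G H).induce s).Reachable ⟨_, ha⟩ ⟨_, hb⟩ := by
  let e : G.edgeSet := ⟨s(a, b), hab⟩
  obtain ⟨w⟩ := ‹Nonempty W›
  obtain ⟨y, hy, hay, hyb⟩ : ∃ y ∈ s, (subdivisionEdgeNC G H).Adj (inl (inl a)) y ∧
      (subdivisionEdgeNC G H).Adj y (inl (inl b)) := by
    by_cases he : inl (inr e) ∈ s
    · exact ⟨_, he, Sym2.mem_mk_left a b, Sym2.mem_mk_right a b⟩
    · have hew : inr (e, w) ∈ s := by
        by_contra hew
        exact inl_ne_inr (hs he hew)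
      exact ⟨_, hew, Sym2.mem_mk_left a b, Sym2.mem_mk_right a b⟩
  have hay' : ((subdivisionEdgeNC G H).induce s).Adj ⟨_, ha⟩ ⟨y, hy⟩ := hay
  have hyb' : ((subdivisionEdgeNC G H).induce s).Adj ⟨y, hy⟩ ⟨_, hb⟩ := hyb
  exact hay'.reachable.trans hyb'.reachable

theorem preconnected_induce_subdivisionEdgeNC [Nonempty W] (hs : sᶜ.Subsingleton) {t : Set V}
    (ht : ∀ v, inl (inl v) ∈ s ↔ v ∈ t) (hG : (G.induce t).Preconnected) :
    ((subdivisionEdgeNC G H).induce s).Preconnected := by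
  refine hG.of_reachable_map (fun v => ⟨_, (ht v).mpr v.2⟩)
    (fun v v' h => reachable_inl_inl_of_adj hs h _ _) fun x => ?_
  obtain ⟨v, hv, h⟩ := exists_reachable_inl_inl hs x
  exact ⟨⟨v, (ht v).mp hv⟩, h.symm⟩

theorem preconnected_subdivisionEdgeNC [Nonempty W] (hG : G.Preconnected) :
    (subdivisionEdgeNC G H).Preconnected := by
  refine (induceUnivIso _).preconnected_iff.mp
    (preconnected_induce_subdivisionEdgeNC (by simp) (t := Set.univ) (by simp) ?_)
  exact (induceUnivIso G).preconnected_iff.mpr hG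

/-- Sending each vertex of `G ⊟ H - u` to an end other than `u` of its footprint turns walks
into walks of `G - u`. -/
theorem preconnected_induce_compl_singleton_of_subdivisionEdgeNC {u : V}
    (h : ((subdivisionEdgeNC G H).induce {inl (inl u)}ᶜ).Preconnected) :
    (G.induce {u}ᶜ).Preconnected := by
  choose f hf using fun x : ↥({inl (inl u)}ᶜ : Set ((V ⊕ G.edgeSet) ⊕ (G.edgeSet × W))) =>
    let ⟨a, ha, hau⟩ := exists_mem_footprint_ne x.2
    (⟨⟨a, hau⟩, ha⟩ : ∃ a : ↥({u}ᶜ : Set V), a.1 ∈ footprint x.1)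
  refine h.of_reachable_map f (fun x y hxy => ?_) fun v => ?_
  · rcases eq_or_adj_of_mem_footprint hxy (hf x) (hf y) with heq | hadj
    · exact Subtype.ext heq ▸ .rfl
    · exact Adj.reachable (G := G.induce {u}ᶜ) hadj
  · have hv : inl (inl v.1) ∈
        ({inl (inl u)}ᶜ : Set ((V ⊕ G.edgeSet) ⊕ (G.edgeSet × W))) := by
      simpa only [Set.mem_compl_iff, Set.mem_singleton_iff, inl.injEq] using v.2
    have hfv : (f ⟨_, hv⟩).1 = v := by simpa [footprint] using hf ⟨_, hv⟩
    exact ⟨⟨_, hv⟩, by rw [Subtype.ext hfv]⟩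

theorem isVertexCut_subdivisionEdgeNC_singleton_iff [Nonempty W] (hG : G.Preconnected)
    {x : (V ⊕ G.edgeSet) ⊕ (G.edgeSet × W)} :
    IsVertexCut (subdivisionEdgeNC G H) {x} ↔ ∃ u, x = inl (inl u) ∧ IsVertexCut G {u} := by
  refine ⟨fun hx => ?_, ?_⟩
  · have hs : ({x}ᶜᶜ : Set ((V ⊕ G.edgeSet) ⊕ (G.edgeSet × W))).Subsingleton := by simp
    rcases x with (u | e) | ⟨e, w⟩
    · exact ⟨u, rfl, fun hGu => hx (preconnected_induce_subdivisionEdgeNC hs (by simp) hGu)⟩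
    all_goals
      exact (hx (preconnected_induce_subdivisionEdgeNC hs (t := Set.univ) (by simp)
        ((induceUnivIso G).preconnected_iff.mpr hG))).elim
  · rintro ⟨u, rfl, hu⟩ hK
    exact hu (preconnected_induce_compl_singleton_of_subdivisionEdgeNC hK)

theorem isRgVertexCut_subdivisionEdgeNC_singleton [Finite V] [Finite W] (hG : G.Preconnected)
    {g : ℕ} (hW : g + 1 ≤ Nat.card W) {u : V} (hu : IsVertexCut G {u}) :
    IsRgVertexCut (subdivisionEdgeNC G H) g {inl (inl u)} := by
  refine ⟨fun hK => hu (preconnected_induce_compl_singleton_of_subdivisionEdgeNC hK),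
    fun c => ?_⟩
  obtain ⟨x, rfl⟩ := c.exists_rep
  obtain ⟨t, ht, hxt⟩ := exists_reachable_inl_inl (by simp) x
  have htu : t ≠ u := by simpa using ht
  obtain ⟨p⟩ := hG t u
  let e : G.edgeSet := ⟨s(t, p.snd), p.adj_snd (Walk.not_nil_of_ne htu)⟩
  have hmem (w : W) :
      (inr (e, w) : (V ⊕ G.edgeSet) ⊕ (G.edgeSet × W)) ∈ ({inl (inl u)}ᶜ : Set _) := by
    simp
  have hcomp (w : W) :
      ((subdivisionEdgeNC G H).induce _).connectedComponentMk ⟨_, hmem w⟩ =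
        ((subdivisionEdgeNC G H).induce _).connectedComponentMk x := by
    have hadj : ((subdivisionEdgeNC G H).induce {inl (inl u)}ᶜ).Adj ⟨_, hmem w⟩ ⟨_, ht⟩ :=
      Sym2.mem_mk_left t p.snd
    exact ConnectedComponent.sound (hadj.reachable.trans hxt.symm)
  calc g + 1 ≤ Nat.card W := hW
    _ ≤ _ := Nat.card_le_card_of_injective (fun w => ⟨⟨_, hmem w⟩, hcomp w⟩)
      fun w w' h => by simpa using congrArg (fun z => z.1.1) h

end SubdivisionEdgeNC

theorem subdivisionEdgeNC_kappaG_eq_one_iff_general {V W : Type*} [Fintype V] [Fintype W]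
    (G : SimpleGraph V) (H : SimpleGraph W)
    (hGconn : G.Connected)
    (m : ℕ) (hm : Fintype.card W = m) (g : ℕ) (hg : g + 1 ≤ m) :
    kappaG (subdivisionEdgeNC G H) g = 1 ↔ kappa G = 1 := by
  have hW : g + 1 ≤ Nat.card W := by rwa [Nat.card_eq_fintype_card, hm]
  have : Nonempty W := (Nat.card_pos_iff.mp (by omega)).1
  have hG := hGconn.preconnected
  rw [kappaG_eq_one_iff (preconnected_subdivisionEdgeNC hG) g, kappa_eq_one_iff hG]
  constructor
  · rintro ⟨x, hx⟩
    obtain ⟨u, -, hu⟩ := (isVertexCut_subdivisionEdgeNC_singleton_iff hG).mp hx.1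
    exact ⟨u, hu⟩
  · rintro ⟨u, hu⟩
    exact ⟨_, isRgVertexCut_subdivisionEdgeNC_singleton hG hW hu⟩

theorem subdivisionEdgeNC_kappaG_eq_one_iff {V W : Type*} [Fintype V] [Fintype W] [DecidableEq V]
    (G : SimpleGraph V) (H : SimpleGraph W)
    (hGconn : G.Connected) (hGnc : G ≠ ⊤) (hHconn : H.Connected)
    (m : ℕ) (hm : Fintype.card W = m) (g : ℕ) (hg : g + 1 ≤ m) :
    kappaG (subdivisionEdgeNC G H) g = 1 ↔ kappa G = 1 :=
  subdivisionEdgeNC_kappaG_eq_one_iff_general G H hGconn m hm g hg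

end ExtraConn
end

section
/- Let G be a connected non-complete nontrivial graph with κ(G) ≥ 2 and H a nontrivial connected graph. Then the 0-extra vertex connectivity of the subdivision edge neighbourhood corona satisfies κ_0(G ⊟ H) = 2. -/
/-!
Deleting both ends of an edge `e` isolates the subdivision vertex `w_e`, so `κ₀(G ⊟ H) ≤ 2`.
Conversely, delete a single vertex `x`. Since `κ(G) ≥ 2`, the surviving vertices of `G` stay
connected in `G - x`, and an edge `ab` of `G` is still realised by a path `a – w – b` with `w`
either `w_{ab}` or a vertex of `H_{ab}`, one of which survives. Every other vertex is adjacent to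
both ends of its edge, one of which survives.
-/

open SimpleGraph

namespace ExtraConn

variable {V W : Type*}

section VertexCut

variable {G : SimpleGraph V}

theorem isVertexCut_of_neighborSet_subset {S : Set V} {x y : V} (hx : x ∉ S) (hy : y ∉ S)
    (hxy : x ≠ y) (hN : G.neighborSet x ⊆ S) : IsVertexCut G S := by
  intro hpre
  obtain ⟨p⟩ := hpre ⟨x, hx⟩ ⟨y, hy⟩
  cases p with
  | nil => exact hxy rfl
  | @cons _ z _ h _ => exact z.2 (hN h)

theorem isRgVertexCut_zero_iff [Finite V] {S : Set V} :
    IsRgVertexCut G 0 S ↔ IsVertexCut G S := by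
  refine ⟨And.left, fun h => ⟨h, fun c => ?_⟩⟩
  obtain ⟨x, hx⟩ := c.exists_rep
  have : Nonempty {v // (G.induce Sᶜ).connectedComponentMk v = c} := ⟨⟨x, hx⟩⟩
  exact Nat.card_pos

theorem kappaG_zero_le_ncard [Finite V] {S : Set V} (h : IsVertexCut G S) :
    kappaG G 0 ≤ S.ncard := by
  refine sInf_le ⟨S.toFinite.toFinset, ?_, ?_⟩
  · rwa [Set.Finite.coe_toFinset, isRgVertexCut_zero_iff]
  · rw [Set.ncard_eq_toFinset_card S]

theorem two_le_kappaG {g : ℕ}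
    (h : ∀ S : Set V, S.Subsingleton → (G.induce Sᶜ).Preconnected) : 2 ≤ kappaG G g := by
  refine le_sInf ?_
  rintro _ ⟨S, hS, rfl⟩
  by_contra! hlt
  have hcard : S.card ≤ 1 := Nat.le_of_lt_succ (by exact_mod_cast hlt)
  exact hS.1 (h S fun x hx y hy => Finset.card_le_one.mp hcard x hx y hy)

theorem preconnected_induce_compl_of_subsingleton (hG : G.Preconnected) (hκ : 2 ≤ kappa G)
    {T : Set V} (hT : T.Subsingleton) : (G.induce Tᶜ).Preconnected := by
  obtain rfl | ⟨x, rfl⟩ := hT.eq_empty_or_singleton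
  · rw [Set.compl_empty]
    exact (induceUnivIso G).preconnected_iff.mpr hG
  · by_contra hcut
    have : kappa G ≤ 1 := Nat.sInf_le
      ⟨{x}, by rwa [IsVertexCut, Finset.coe_singleton], Finset.card_singleton x⟩
    omega

end VertexCut

theorem _root_.SimpleGraph.Reachable.lift {V' : Type*} {G : SimpleGraph V}
    {G' : SimpleGraph V'} (f : V → V') (hf : ∀ a b, G.Adj a b → G'.Reachable (f a) (f b))
    {a b : V} (h : G.Reachable a b) : G'.Reachable (f a) (f b) := by
  rw [reachable_iff_reflTransGen] at h ⊢
  exact Relation.ReflTransGen.lift' f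
    (fun a b hab => (reachable_iff_reflTransGen _ _).mp (hf a b hab)) _ _ h

section SubdivisionEdgeNC

variable {G : SimpleGraph V} {H : SimpleGraph W}

theorem subdivisionEdgeNC_neighborSet_inl_inr (e : G.edgeSet) :
    (subdivisionEdgeNC G H).neighborSet (.inl (.inr e)) =
      {x | ∃ u ∈ (e : Sym2 V), x = .inl (.inl u)} := by
  ext ((u | e') | ⟨e', w⟩) <;> simp [subdivisionEdgeNC, subdivision]

variable {S : Set ((V ⊕ G.edgeSet) ⊕ (G.edgeSet × W))}

theorem subdivisionEdgeNC_exists_endpoint_not_mem (hS : S.Subsingleton) (e : G.edgeSet) :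
    ∃ u ∈ (e : Sym2 V), .inl (.inl u) ∉ S := by
  obtain ⟨⟨a, b⟩, hab⟩ := e
  by_contra! h
  have := hS (h a (Sym2.mem_mk_left a b)) (h b (Sym2.mem_mk_right a b))
  exact hab.ne (by simpa using this)

theorem subdivisionEdgeNC_exists_reachable_inl_inl (hS : S.Subsingleton) (x : ↥Sᶜ) :
    ∃ (u : V) (hu : .inl (.inl u) ∈ Sᶜ),
      ((subdivisionEdgeNC G H).induce Sᶜ).Reachable x ⟨_, hu⟩ := by
  obtain ⟨(u | e) | ⟨e, w⟩, hx⟩ := x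
  · exact ⟨u, hx, .rfl⟩
  · obtain ⟨u, hue, hu⟩ := subdivisionEdgeNC_exists_endpoint_not_mem hS e
    exact ⟨u, hu, Adj.reachable hue⟩
  · obtain ⟨u, hue, hu⟩ := subdivisionEdgeNC_exists_endpoint_not_mem hS e
    exact ⟨u, hu, Adj.reachable hue⟩

variable [Nonempty W]

theorem subdivisionEdgeNC_isVertexCut_endpoints {u v : V} (huv : G.Adj u v) :
    IsVertexCut (subdivisionEdgeNC G H) {Sum.inl (Sum.inl u), Sum.inl (Sum.inl v)} := by
  let e : G.edgeSet := ⟨s(u, v), huv⟩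
  refine isVertexCut_of_neighborSet_subset (x := .inl (.inr e))
    (y := .inr (e, Classical.arbitrary W)) (by simp) (by simp) (by simp) ?_
  rw [subdivisionEdgeNC_neighborSet_inl_inr]
  rintro _ ⟨w, hw, rfl⟩
  rcases Sym2.mem_iff.mp hw with rfl | rfl <;> simp

/-- The subdivision vertex of `ab` and the vertices of its copy of `H` are common neighbours of
`a` and `b`; the subsingleton `S` cannot contain both kinds. -/
theorem subdivisionEdgeNC_reachable_of_adj (hS : S.Subsingleton) {a b : V} (hab : G.Adj a b)
    (ha : Sum.inl (Sum.inl a) ∈ Sᶜ) (hb : Sum.inl (Sum.inl b) ∈ Sᶜ) :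
    ((subdivisionEdgeNC G H).induce Sᶜ).Reachable ⟨_, ha⟩ ⟨_, hb⟩ := by
  let e : G.edgeSet := ⟨s(a, b), hab⟩
  obtain ⟨m, hm, ham, hmb⟩ : ∃ m ∈ Sᶜ, (subdivisionEdgeNC G H).Adj (.inl (.inl a)) m ∧
      (subdivisionEdgeNC G H).Adj m (.inl (.inl b)) := by
    by_cases h : Sum.inl (Sum.inr e) ∈ S
    · exact ⟨.inr (e, Classical.arbitrary W), fun h' => by simpa using hS h h',
        Sym2.mem_mk_left a b, Sym2.mem_mk_right a b⟩
    · exact ⟨_, h, Sym2.mem_mk_left a b, Sym2.mem_mk_right a b⟩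
  have ham' : ((subdivisionEdgeNC G H).induce Sᶜ).Adj ⟨_, ha⟩ ⟨m, hm⟩ := ham
  have hmb' : ((subdivisionEdgeNC G H).induce Sᶜ).Adj ⟨m, hm⟩ ⟨_, hb⟩ := hmb
  exact ham'.reachable.trans hmb'.reachable

theorem subdivisionEdgeNC_preconnected_induce_compl
    (hG : ∀ T : Set V, T.Subsingleton → (G.induce Tᶜ).Preconnected) (hS : S.Subsingleton) :
    ((subdivisionEdgeNC G H).induce Sᶜ).Preconnected := by
  let T : Set V := (fun u => Sum.inl (Sum.inl u)) ⁻¹' S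
  have hT : T.Subsingleton := hS.preimage (Sum.inl_injective.comp Sum.inl_injective)
  let f : ↥Tᶜ → ↥Sᶜ := fun u => ⟨_, u.2⟩
  intro x y
  obtain ⟨a, ha, hxa⟩ := subdivisionEdgeNC_exists_reachable_inl_inl hS x
  obtain ⟨b, hb, hyb⟩ := subdivisionEdgeNC_exists_reachable_inl_inl hS y
  have hab : ((subdivisionEdgeNC G H).induce Sᶜ).Reachable (f ⟨a, ha⟩) (f ⟨b, hb⟩) :=
    (hG T hT _ _).lift f fun a b hab => subdivisionEdgeNC_reachable_of_adj hS hab a.2 b.2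
  exact hxa.trans (hab.trans hyb.symm)

end SubdivisionEdgeNC

theorem subdivisionEdgeNC_kappaG_zero_general {V W : Type*} [Fintype V] [Fintype W]
    [Nontrivial V] [Nontrivial W]
    (G : SimpleGraph V) (H : SimpleGraph W)
    (hGconn : G.Connected) (hkappa : 2 ≤ kappa G) :
    kappaG (subdivisionEdgeNC G H) 0 = 2 := by
  obtain ⟨v₀⟩ : Nonempty V := inferInstance
  obtain ⟨u, huv⟩ := hGconn.preconnected.exists_adj_of_nontrivial v₀
  refine le_antisymm ?_ ?_
  · calc kappaG (subdivisionEdgeNC G H) 0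
        ≤ (({Sum.inl (Sum.inl v₀), Sum.inl (Sum.inl u)} : Set _).ncard : ℕ∞) :=
          kappaG_zero_le_ncard (subdivisionEdgeNC_isVertexCut_endpoints huv)
      _ = 2 := by rw [Set.ncard_pair (by simpa using huv.ne)]; rfl
  · exact two_le_kappaG fun _ =>
      subdivisionEdgeNC_preconnected_induce_compl
        (fun _ => preconnected_induce_compl_of_subsingleton hGconn.preconnected hkappa)

theorem subdivisionEdgeNC_kappaG_zero {V W : Type*} [Fintype V] [Fintype W] [DecidableEq V]
    [Nontrivial V] [Nontrivial W]
    (G : SimpleGraph V) (H : SimpleGraph W)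
    (hGconn : G.Connected) (hGnc : G ≠ ⊤) (hHconn : H.Connected)
    (hkappa : 2 ≤ kappa G) :
    kappaG (subdivisionEdgeNC G H) 0 = 2 :=
  subdivisionEdgeNC_kappaG_zero_general G H hGconn hkappa

end ExtraConn
end
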